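/- arXiv:2504.07005 — 2 statements merged into one kernel-verified Lean document; each statement's English description precedes it below -/
import Mathlib

section
/- For every f ∈ A one has φ(f) − f^p ∈ p·A; and for every integer n ≥ 1 and every f lying in the ideal (X^n) of A, the unique element g ∈ A with p·g = φ(f) − f^p also lies in (X^n). In other words, the δ-structure map δ(f) := (φ(f) − f^p)/p on A = W(k)⟦q−1⟧ maps the ideal ((q−1)^n) into itself for every n ≥ 1; hence δ^k((q−1)^n) ⊆ ((q−1)^n) for all k ≥ 1. -/
/-!
Reducing the Witt-vector coefficients to `k` turns `(1 + X)^p - 1` into `X^p` and the Witt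
Frobenius into the `p`-th power, so `φ` reduces to `f ↦ f^p` on `k⟦X⟧`. Hence every coefficient
of `φ(f) - f^p` has vanishing `0`-th Witt component, and since `k` is perfect such a Witt vector
is `V(F y) = p * y`. For the second part, the coefficient of `X^m` in `φ(f)` only involves the
coefficients of `f` of index `≤ m`, so `φ`, like `f ↦ f^p`, preserves `(X^n)`; as multiplication
by `p = V ∘ F` is injective on `W(k)`, `p * g ∈ (X^n)` forces `g ∈ (X^n)`.
-/

open Finset

/-- The Frobenius lift `φ` on `A = W(k)⟦X⟧`: it applies the Witt-vector Frobenius of `W(k)`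
to the coefficients and substitutes `X ↦ (1+X)^p − 1` (i.e. `q ↦ q^p` for `q = 1 + X`).
The coefficient of `X^m` in `φ(f)` is `∑_{n ≤ m} F(aₙ)·(coefficient of X^m in ((1+X)^p−1)^n)`,
which is the (finite) coefficientwise formula for this substitution since `(1+X)^p − 1` has
zero constant term. -/
noncomputable def frobSubst (p : ℕ) [Fact p.Prime] (k : Type*) [CommRing k]
    (f : PowerSeries (WittVector p k)) : PowerSeries (WittVector p k) :=
  PowerSeries.mk fun m =>
    ∑ n ∈ Finset.range (m + 1),
      WittVector.frobenius (PowerSeries.coeff n f) *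
        PowerSeries.coeff m (((1 + PowerSeries.X : PowerSeries (WittVector p k)) ^ p - 1) ^ n)

namespace PowerSeries

variable {R : Type*} [CommRing R]

theorem map_frobenius_expand (p : ℕ) (hp : p ≠ 0) [ExpChar R p] (f : PowerSeries R) :
    map (frobenius R p) (expand p hp f) = f ^ p :=
  MvPowerSeries.map_frobenius_expand p hp

theorem C_dvd_of_forall_dvd_coeff {a : R} {f : PowerSeries R} (h : ∀ n, a ∣ coeff n f) :
    C a ∣ f := by
  choose g hg using h
  exact ⟨mk g, ext fun n => by rw [coeff_C_mul, coeff_mk, hg]⟩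

theorem X_pow_dvd_of_X_pow_dvd_C_mul {a : R} (ha : IsLeftRegular a) {n : ℕ} {g : PowerSeries R}
    (h : X ^ n ∣ C a * g) : X ^ n ∣ g := by
  rw [X_pow_dvd_iff] at h ⊢
  intro m hm
  exact ha (by simpa only [coeff_C_mul, mul_zero] using h m hm)

end PowerSeries

namespace WittVector

variable {p : ℕ} [Fact p.Prime] {R : Type*} [CommRing R] [CharP R p] [PerfectRing R p]

theorem natCast_dvd_of_coeff_zero_eq_zero {x : WittVector p R} (hx : x.coeff 0 = 0) :
    (p : WittVector p R) ∣ x := by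
  obtain ⟨y, hy⟩ := (frobenius_bijective p R).surjective (x.shift 1)
  have hx' : x = verschiebung (x.shift 1) := by
    simpa using eq_iterate_verschiebung (n := 1) (x := x) fun i hi => by interval_cases i; exact hx
  exact ⟨y, by rw [hx', ← hy, verschiebung_frobenius, mul_comm]⟩

theorem isLeftRegular_natCast : IsLeftRegular (p : WittVector p R) := fun x y hxy => by
  simp only [mul_comm (p : WittVector p R), ← verschiebung_frobenius] at hxy
  exact (frobenius_bijective p R).injective (verschiebung_injective p R hxy)

end WittVector

open PowerSeries

section frobSubst

variable (p : ℕ) [Fact p.Prime] (k : Type*) [CommRing k]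

theorem X_pow_dvd_frobSubst {n : ℕ} {f : PowerSeries (WittVector p k)} (hf : X ^ n ∣ f) :
    X ^ n ∣ frobSubst p k f := by
  rw [X_pow_dvd_iff] at hf ⊢
  intro m hm
  rw [frobSubst, coeff_mk]
  refine Finset.sum_eq_zero fun j hj => ?_
  rw [hf j (by grind), map_zero, zero_mul]

theorem map_constantCoeff_frobSubst [CharP k p] (f : PowerSeries (WittVector p k)) :
    map WittVector.constantCoeff (frobSubst p k f) = map WittVector.constantCoeff f ^ p := by
  have hp := (Fact.out : p.Prime)
  have := charP_of_injective_algebraMap (C_injective (R := k)) p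
  have hX : map WittVector.constantCoeff ((1 + X : PowerSeries (WittVector p k)) ^ p - 1) =
      X ^ p := by
    rw [map_sub, map_pow, map_add, map_one, map_X, add_pow_char, one_pow, add_sub_cancel_left]
  have hterm : ∀ m n, WittVector.constantCoeff (WittVector.frobenius (coeff n f) *
      coeff m (((1 + X : PowerSeries (WittVector p k)) ^ p - 1) ^ n)) =
      WittVector.constantCoeff (coeff n f) ^ p * if m = p * n then 1 else 0 := by
    intro m n
    rw [map_mul, ← coeff_map WittVector.constantCoeff m, map_pow, hX, ← pow_mul, coeff_X_pow]
    exact congrArg (· * _) (WittVector.coeff_frobenius_charP p (coeff n f) 0)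
  rw [← map_frobenius_expand p hp.ne_zero]
  ext m
  rw [coeff_map, coeff_map, coeff_expand, frobSubst, coeff_mk, map_sum]
  simp only [hterm, mul_ite, mul_one, mul_zero]
  by_cases hm : p ∣ m
  · obtain ⟨c, rfl⟩ := hm
    rw [if_pos (dvd_mul_right p c), Nat.mul_div_cancel_left c hp.pos, frobenius_def, coeff_map]
    have hc : c ∈ Finset.range (p * c + 1) :=
      Finset.mem_range.2 (Nat.lt_succ_of_le (Nat.le_mul_of_pos_left c hp.pos))
    refine (Finset.sum_eq_single_of_mem c hc fun n _ hn => ?_).trans (if_pos rfl)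
    exact if_neg fun h => hn (Nat.eq_of_mul_eq_mul_left hp.pos h).symm
  · rw [if_neg hm, map_zero]
    exact Finset.sum_eq_zero fun n _ => if_neg fun h => hm ⟨n, h⟩

theorem natCast_dvd_frobSubst_sub_pow [CharP k p] [PerfectRing k p]
    (f : PowerSeries (WittVector p k)) :
    (p : PowerSeries (WittVector p k)) ∣ frobSubst p k f - f ^ p := by
  have hred : map WittVector.constantCoeff (frobSubst p k f - f ^ p) = 0 := by
    rw [map_sub, map_pow, map_constantCoeff_frobSubst, sub_self]
  rw [← map_natCast (C (R := WittVector p k))]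
  refine C_dvd_of_forall_dvd_coeff fun m => WittVector.natCast_dvd_of_coeff_zero_eq_zero ?_
  have hcoeff := congrArg (coeff m) hred
  rwa [coeff_map, map_zero] at hcoeff

end frobSubst

/-- For every `f ∈ A = W(k)⟦X⟧` one has `φ(f) − f^p ∈ p·A`; and for every
`n ≥ 1` and every `f` in the ideal `(X^n)`, any `g ∈ A` with `p·g = φ(f) − f^p` also lies in
`(X^n)`.  In other words the δ-structure `δ(f) = (φ(f) − f^p)/p` on `A` maps the ideal
`((q−1)^n)` into itself for every `n ≥ 1`. -/
theorem stmt12 (p : ℕ) [Fact p.Prime] (k : Type*) [Field k] [CharP k p] [PerfectRing k p] :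
    (∀ f : PowerSeries (WittVector p k),
      frobSubst p k f - f ^ p ∈ Ideal.span {(p : PowerSeries (WittVector p k))}) ∧
    (∀ n : ℕ, 1 ≤ n → ∀ f ∈ Ideal.span {(PowerSeries.X : PowerSeries (WittVector p k)) ^ n},
      ∀ g : PowerSeries (WittVector p k),
        (p : PowerSeries (WittVector p k)) * g = frobSubst p k f - f ^ p →
          g ∈ Ideal.span {(PowerSeries.X : PowerSeries (WittVector p k)) ^ n}) := by
  refine ⟨fun f => Ideal.mem_span_singleton.2 (natCast_dvd_frobSubst_sub_pow p k f),
    fun n _ f hf g hg => ?_⟩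
  rw [Ideal.mem_span_singleton] at hf ⊢
  refine X_pow_dvd_of_X_pow_dvd_C_mul WittVector.isLeftRegular_natCast ?_
  rw [map_natCast, hg]
  exact dvd_sub (X_pow_dvd_frobSubst p k hf)
    (hf.trans (dvd_pow_self f (Fact.out : p.Prime).ne_zero))
end

section
/- Take m = 1 and write T := T_1, ε := ε_1, so S = ℤ[q][T][ε]/(ε² − (q−1)Tε). There exists a unique Witt vector c ∈ 𝕎(S) such that for every n ≥ 0 the n-th ghost component of c equals ε·T^{p^n−1}·[p^n]_q. (This is the ghost-component description, for the coordinate T, of the element c_ψ(T) of Proposition 4.4, which satisfies ψ̃(T) − ι̃(T) = [p]_q·c_ψ(T) for the δ-ring lifts of ψ and the inclusion.) -/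
open Finset

/-- The q-analogue `[n]_t = ∑_{i=0}^{n-1} t^i`. -/
def qan {A : Type*} [CommRing A] (t : A) (n : ℕ) : A := ∑ i ∈ Finset.range n, t ^ i

/-- `B := ℤ[q][T]`: the outer variable is `T`, the inner one is `q`. -/
abbrev BTq := Polynomial (Polynomial ℤ)

/-- `q ∈ B`. -/
noncomputable def qB : BTq := Polynomial.C Polynomial.X

/-- `T ∈ B`. -/
noncomputable def TB : BTq := Polynomial.X

/-- The polynomial `ε² − (q−1)·T·ε` over `B`. -/
noncomputable def relPoly : Polynomial BTq :=
  Polynomial.X ^ 2 - Polynomial.C ((qB - 1) * TB) * Polynomial.X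

/-- `S := ℤ[q][T][ε]/(ε² − (q−1)·T·ε)`, a free `B`-module with basis `1, ε`. -/
noncomputable abbrev SS := AdjoinRoot relPoly

/-- `ε ∈ S`. -/
noncomputable def epsS : SS := AdjoinRoot.root relPoly

/-!
The Witt vector is `[T + ε] − [T]`, a difference of Teichmüller lifts: its `n`-th ghost component
is `(T + ε)^(p^n) − T^(p^n)`, and since `ε (T + ε) = q T ε` the binomial expansion collapses to
`ε T^(p^n − 1) [p^n]_q`. Uniqueness holds because `S` is free over the domain `ℤ[q][T]`, hence
`p`-torsion-free, so `𝕎(S)` embeds into `𝕎(S[1/p])`, where the ghost map is bijective.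
-/

theorem map_qan {A A' : Type*} [CommRing A] [CommRing A'] (f : A →+* A') (t : A) (n : ℕ) :
    f (qan t n) = qan (f t) n := by
  simp [qan]

theorem add_pow_sub_pow_of_mul_self_eq {R : Type*} [CommRing R] {t q ε : R}
    (h : ε * ε = (q - 1) * t * ε) {n : ℕ} (hn : n ≠ 0) :
    (t + ε) ^ n - t ^ n = ε * t ^ (n - 1) * qan q n := by
  obtain ⟨k, rfl⟩ := Nat.exists_eq_add_one_of_ne_zero hn
  rw [Nat.add_sub_cancel]
  clear hn
  induction k with
  | zero => simp [qan]
  | succ k ih =>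
    have hq : qan q (k + 2) = q * qan q (k + 1) + 1 := geom_sum_succ
    rw [hq]
    linear_combination (t + ε) * ih + t ^ k * qan q (k + 1) * h

theorem natCast_mem_nonZeroDivisors {R A : Type*} [CommRing R] [IsDomain R] [CharZero R]
    [CommRing A] [Algebra R A] [Module.IsTorsionFree R A] {n : ℕ} (hn : n ≠ 0) :
    (n : A) ∈ nonZeroDivisors A := by
  have hreg : IsSMulRegular A (n : R) := IsSMulRegular.of_ne_zero (Nat.cast_ne_zero.mpr hn)
  rw [mem_nonZeroDivisors_iff_right]
  intro x hx
  apply hreg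
  simp only [Algebra.smul_def, map_natCast, mul_comm, hx, mul_zero]

namespace WittVector

variable {p : ℕ} [Fact p.Prime] {R A : Type*} [CommRing R] [CommRing A]

theorem ghostComponent_map (f : R →+* A) (x : WittVector p R) (n : ℕ) :
    ghostComponent n (map f x) = f (ghostComponent n x) := by
  simp only [ghostComponent_apply, MvPolynomial.aeval_def, MvPolynomial.eval₂_comp_left f]
  congr 1
  exact Subsingleton.elim _ _

theorem ghostMap_injective_of_mem_nonZeroDivisors (hpR : (p : R) ∈ nonZeroDivisors R) :
    Function.Injective (ghostMap : WittVector p R → ℕ → R) := by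
  let K := Localization.Away (p : R)
  have hinj : Function.Injective (algebraMap R K) :=
    IsLocalization.injective K (Submonoid.powers_le.mpr hpR)
  have hunit : IsUnit (p : K) := by
    simpa using IsLocalization.Away.algebraMap_isUnit (S := K) (p : R)
  let := hunit.invertible
  intro x y hxy
  apply map_injective _ hinj
  apply (ghostMap.bijective_of_invertible p K).injective
  funext n
  have hn := congrFun hxy n
  simp only [ghostMap_apply] at hn
  simp only [ghostMap_apply, ghostComponent_map, hn]

end WittVector

theorem relPoly_monic : relPoly.Monic := by
  unfold relPoly
  monicity!

instance : Module.Free BTq SS := .of_basis (AdjoinRoot.powerBasis' relPoly_monic).basis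

theorem aeval_relPoly {A : Type*} [CommRing A] [Algebra BTq A] (x : A) :
    Polynomial.aeval x relPoly = x ^ 2 - algebraMap BTq A ((qB - 1) * TB) * x := by
  simp [relPoly]

theorem epsS_mul_self :
    epsS * epsS = (algebraMap BTq SS qB - 1) * algebraMap BTq SS TB * epsS := by
  have h := aeval_relPoly epsS
  rw [epsS, AdjoinRoot.aeval_eq, AdjoinRoot.mk_self, map_mul, map_sub, map_one] at h
  rw [epsS]
  linear_combination -h

/-- (The case `m = 1`, `T := T₁`, `ε := ε₁`, so
`S = ℤ[q][T][ε]/(ε² − (q−1)Tε)`.)  There exists a unique Witt vector `c ∈ 𝕎(S)` whose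
`n`-th ghost component is `ε·T^{p^n−1}·[p^n]_q` for every `n ≥ 0`. -/
theorem stmt14 (p : ℕ) [Fact p.Prime] :
    ∃! c : WittVector p SS, ∀ n : ℕ,
      WittVector.ghostComponent n c =
        epsS * algebraMap _ _ (TB ^ (p ^ n - 1) * qan qB (p ^ n)) := by
  have hghost : ∀ n : ℕ,
      WittVector.ghostComponent n
          (WittVector.teichmuller p (algebraMap BTq SS TB + epsS)
            - WittVector.teichmuller p (algebraMap BTq SS TB)) =
        epsS * algebraMap _ _ (TB ^ (p ^ n - 1) * qan qB (p ^ n)) := by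
    intro n
    rw [map_sub, WittVector.ghostComponent_teichmuller, WittVector.ghostComponent_teichmuller,
      add_pow_sub_pow_of_mul_self_eq epsS_mul_self (pow_ne_zero n (Fact.out : p.Prime).ne_zero),
      map_mul, map_pow, map_qan, mul_assoc]
  have hp : (p : SS) ∈ nonZeroDivisors SS :=
    natCast_mem_nonZeroDivisors (R := BTq) (Fact.out : p.Prime).ne_zero
  refine ⟨_, hghost, fun c hc => WittVector.ghostMap_injective_of_mem_nonZeroDivisors hp ?_⟩
  funext n
  simp only [WittVector.ghostMap_apply, hc, hghost]
end
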